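/- Let Q ∈ L(H) be a J-normal projection on a Krein space (H,J), and set E = Q Q^#, P = Q(I − Q^#), F = (I − Q)(I − Q)^#. Then I − Q = F + P^#, and the products satisfy E P = P E = E P^# = P^# E = 0 and F P = P F = F P^# = P^# F = 0. -/
import Mathlib


open ContinuousLinearMap

variable {H : Type*} [NormedAddCommGroup H] [InnerProductSpace ℂ H] [CompleteSpace H]

/-- The `J`-adjoint `T^# = J T* J`. -/
noncomputable def sharp (J T : H →L[ℂ] H) : H →L[ℂ] H :=
  J ∘L (ContinuousLinearMap.adjoint T) ∘L J

lemma sharp_mul (J : H →L[ℂ] H) (hJ2 : J ∘L J = 1) (A B : H →L[ℂ] H) :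
    sharp J (A * B) = sharp J B * sharp J A := by
  have hJJ : J * J = 1 := hJ2
  have hJx : ∀ x : H →L[ℂ] H, J * (J * x) = x := fun x => by
    rw [← mul_assoc, hJJ, one_mul]
  show J * (adjoint (A * B)) * J = (J * adjoint B * J) * (J * adjoint A * J)
  have : adjoint (A * B) = adjoint B * adjoint A := adjoint_comp A B
  rw [this]
  simp only [mul_assoc, hJx]

lemma sharp_one (J : H →L[ℂ] H) (hJ2 : J ∘L J = 1) : sharp J 1 = 1 := by
  show J * adjoint 1 * J = 1
  have : adjoint (1 : H →L[ℂ] H) = 1 := adjoint_id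
  rw [this, mul_one]; exact hJ2

lemma sharp_sub (J A B : H →L[ℂ] H) : sharp J (A - B) = sharp J A - sharp J B := by
  simp [sharp, map_sub, sub_comp, comp_sub]

lemma sharp_sharp (J : H →L[ℂ] H) (hJsa : ContinuousLinearMap.adjoint J = J)
    (hJ2 : J ∘L J = 1) (T : H →L[ℂ] H) : sharp J (sharp J T) = T := by
  have hJJ : J * J = 1 := hJ2
  show J * adjoint (J * adjoint T * J) * J = T
  have hm : ∀ A B : H →L[ℂ] H, adjoint (A * B) = adjoint B * adjoint A :=
    fun A B => adjoint_comp A B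
  rw [hm, hm, adjoint_adjoint, hJsa]
  simp only [mul_assoc, ← mul_assoc J J, hJJ, one_mul]
  rw [mul_one]

/-- For a `J`-normal projection `Q`, with `E = QQ^#`, `P = Q(I−Q^#)`, `F = (I−Q)(I−Q)^#`,
one has `I − Q = F + P^#` together with the vanishing products. -/
theorem stmt3 (J Q : H →L[ℂ] H)
    (hJsa : ContinuousLinearMap.adjoint J = J) (hJ2 : J ∘L J = 1)
    (hQ : Q ∘L Q = Q) (hN : Q ∘L sharp J Q = sharp J Q ∘L Q)
    (E P F : H →L[ℂ] H)
    (hE : E = Q ∘L sharp J Q) (hP : P = Q ∘L (1 - sharp J Q))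
    (hF : F = (1 - Q) ∘L sharp J (1 - Q)) :
    1 - Q = F + sharp J P ∧
    E ∘L P = 0 ∧ P ∘L E = 0 ∧ E ∘L sharp J P = 0 ∧ sharp J P ∘L E = 0 ∧
    F ∘L P = 0 ∧ P ∘L F = 0 ∧ F ∘L sharp J P = 0 ∧ sharp J P ∘L F = 0 := by
  set S := sharp J Q with hSdef
  have hQ' : Q * Q = Q := hQ
  have hS : S * S = S := by
    have := congrArg (sharp J) hQ
    rwa [show Q ∘L Q = Q * Q from rfl, sharp_mul J hJ2] at this
  have hSQ : S * Q = Q * S := hN.symm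
  have hSP : sharp J P = (1 - Q) * S := by
    rw [hP, show Q ∘L (1 - S) = Q * (1 - S) from rfl, sharp_mul J hJ2, sharp_sub,
      sharp_one J hJ2, ← hSdef, sharp_sharp J hJsa hJ2]
  have hF' : F = (1 - Q) * (1 - S) := by
    rw [hF, sharp_sub, sharp_one J hJ2, ← hSdef]; rfl
  have hE' : E = Q * S := hE
  have hP' : P = Q * (1 - S) := hP
  have hQQ : ∀ x : H →L[ℂ] H, Q * (Q * x) = Q * x := fun x => by
    rw [← mul_assoc, hQ']
  have hSS : ∀ x : H →L[ℂ] H, S * (S * x) = S * x := fun x => by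
    rw [← mul_assoc, hS]
  have hSQ' : ∀ x : H →L[ℂ] H, S * (Q * x) = Q * (S * x) := fun x => by
    rw [← mul_assoc, hSQ, mul_assoc]
  rw [hSP, hE', hP', hF']
  refine ⟨?_, ?_, ?_, ?_, ?_, ?_, ?_, ?_, ?_⟩ <;>
    simp only [show ∀ A B : H →L[ℂ] H, A ∘L B = A * B from fun _ _ => rfl, mul_sub,
      sub_mul, one_mul, mul_one, mul_assoc, hQQ, hSS, hSQ, hSQ', hQ', hS] <;>
    abel
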